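/- If b : ℝ → ℝ is twice continuously differentiable with b(0) ≥ 0 and ḃ(0) + p·b(0) ≥ 0, and for all t ≥ 0, b̈(t) + 2p·ḃ(t) + p²·b(t) ≥ 0 with p > 0, then b(t) ≥ 0 and ḃ(t) + p·b(t) ≥ 0 for all t ≥ 0. -/

import Mathlib

/-! With `ψ₁ = ḃ + p b`, the hypothesis reads `ψ̇₁ + p ψ₁ ≥ 0`. An inequality `ḟ + p f ≥ 0` says
that `t ↦ e^{p t} f t` is monotone, so it propagates `f 0 ≥ 0` forward in time; applying this
first to `ψ₁` and then to `b` gives both conclusions. -/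

open Real Set

lemma hasDerivAt_exp_mul_mul {f : ℝ → ℝ} {f' : ℝ} (p s : ℝ) (hf : HasDerivAt f f' s) :
    HasDerivAt (fun t => exp (p * t) * f t) (exp (p * s) * (f' + p * f s)) s := by
  have hexp : HasDerivAt (fun t => exp (p * t)) (exp (p * s) * p) s := by
    simpa using ((hasDerivAt_id s).const_mul p).exp
  exact (hexp.mul hf).congr_deriv (by ring)

lemma nonneg_of_deriv_add_mul_nonneg {f : ℝ → ℝ} (p : ℝ) (hf : Differentiable ℝ f)
    (h0 : 0 ≤ f 0) (h : ∀ t, 0 ≤ t → 0 ≤ deriv f t + p * f t) {t : ℝ} (ht : 0 ≤ t) :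
    0 ≤ f t := by
  have hderiv s := hasDerivAt_exp_mul_mul p s (hf s).hasDerivAt
  have hmono : MonotoneOn (fun s => exp (p * s) * f s) (Ici 0) := by
    refine monotoneOn_of_deriv_nonneg (convex_Ici 0)
      (fun s _ => (hderiv s).continuousAt.continuousWithinAt)
      (fun s _ => (hderiv s).differentiableAt.differentiableWithinAt) fun s hs => ?_
    rw [interior_Ici] at hs
    rw [(hderiv s).deriv]
    exact mul_nonneg (exp_nonneg _) (h s hs.le)
  have : exp (p * 0) * f 0 ≤ exp (p * t) * f t := hmono self_mem_Ici ht ht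
  rw [mul_zero, exp_zero, one_mul] at this
  exact nonneg_of_mul_nonneg_right (h0.trans this) (exp_pos _)

theorem hocbf_forward_invariance_general (b : ℝ → ℝ) (p : ℝ)
    (hb : ContDiff ℝ 2 b) (h0 : 0 ≤ b 0) (h1 : deriv b 0 + p * b 0 ≥ 0)
    (hineq : ∀ t : ℝ, 0 ≤ t →
      deriv (deriv b) t + 2 * p * deriv b t + p ^ 2 * b t ≥ 0) :
    ∀ t : ℝ, 0 ≤ t → 0 ≤ b t ∧ deriv b t + p * b t ≥ 0 := by
  have hb₁ : Differentiable ℝ b := hb.differentiable two_ne_zero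
  have hb₂ : Differentiable ℝ (deriv b) :=
    (hb.iterate_deriv' 1 1).differentiable one_ne_zero
  set ψ : ℝ → ℝ := fun t => deriv b t + p * b t
  have hψ_deriv (t : ℝ) : deriv ψ t = deriv (deriv b) t + p * deriv b t :=
    ((hb₂ t).hasDerivAt.add ((hb₁ t).hasDerivAt.const_mul p)).deriv
  have hψ_nonneg {t : ℝ} (ht : 0 ≤ t) : 0 ≤ ψ t := by
    have hψ_diff : Differentiable ℝ ψ := hb₂.add (hb₁.const_mul p)
    refine nonneg_of_deriv_add_mul_nonneg (f := ψ) p hψ_diff h1 (fun s hs => ?_) ht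
    rw [hψ_deriv]
    linarith [hineq s hs]
  exact fun t ht => ⟨nonneg_of_deriv_add_mul_nonneg p hb₁ h0 (fun s hs => hψ_nonneg hs) ht,
    hψ_nonneg ht⟩

/-- Second-order HOCBF forward invariance with linear class K functions:
if `b(0) ≥ 0`, `ḃ(0) + p·b(0) ≥ 0` and `b̈ + 2p·ḃ + p²·b ≥ 0` on `[0,∞)`,
then `b ≥ 0` and `ḃ + p·b ≥ 0` on `[0,∞)`. -/
theorem hocbf_forward_invariance (b : ℝ → ℝ) (p : ℝ) (hp : 0 < p)
    (hb : ContDiff ℝ 2 b) (h0 : 0 ≤ b 0) (h1 : deriv b 0 + p * b 0 ≥ 0)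
    (hineq : ∀ t : ℝ, 0 ≤ t →
      deriv (deriv b) t + 2 * p * deriv b t + p ^ 2 * b t ≥ 0) :
    ∀ t : ℝ, 0 ≤ t → 0 ≤ b t ∧ deriv b t + p * b t ≥ 0 :=
  hocbf_forward_invariance_general b p hb h0 h1 hineq
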